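/- The map x defined by x(s,u) := √(s²+c²) • Y(s,u) satisfies ⟪x, ∂x/∂uⱼ⟫ = 0 for j = 2,…,n and ⟪x, ∂x/∂s⟫ = s at every point (s,u) ∈ U. Consequently, since ∂x/∂s is a unit vector orthogonal to ∂x/∂u₂, …, ∂x/∂uₙ, the orthogonal projection of the position vector x(s,u) onto the tangent space span{∂x/∂s, ∂x/∂u₂, …, ∂x/∂uₙ} equals s • ∂x/∂s(s,u), i.e. x^T = s ∂/∂s. (Equation (4.29) in the proof of Theorem 4.2.) -/

import Mathlib

open scoped RealInnerProductSpace

/-- Partial derivative in the first (`s`) coordinate direction of `ℝ × ℝᵏ`. -/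
noncomputable def pds {k m : ℕ}
    (x : ℝ × EuclideanSpace ℝ (Fin k) → EuclideanSpace ℝ (Fin m))
    (p : ℝ × EuclideanSpace ℝ (Fin k)) : EuclideanSpace ℝ (Fin m) :=
  fderiv ℝ x p (1, 0)

/-- Partial derivative in the `j`-th coordinate direction of the second factor of
`ℝ × ℝᵏ`. -/
noncomputable def pdu {k m : ℕ}
    (x : ℝ × EuclideanSpace ℝ (Fin k) → EuclideanSpace ℝ (Fin m))
    (j : Fin k) (p : ℝ × EuclideanSpace ℝ (Fin k)) : EuclideanSpace ℝ (Fin m) :=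
  fderiv ℝ x p (0, EuclideanSpace.single j 1)

/-- Orthogonal projection of `v` onto the tangent space `range (fderiv ℝ x p)`. -/
noncomputable def tangentProjP {k m : ℕ}
    (x : ℝ × EuclideanSpace ℝ (Fin k) → EuclideanSpace ℝ (Fin m))
    (p : ℝ × EuclideanSpace ℝ (Fin k)) (v : EuclideanSpace ℝ (Fin m)) :
    EuclideanSpace ℝ (Fin m) :=
  (Submodule.orthogonalProjection (LinearMap.range (fderiv ℝ x p : (ℝ × EuclideanSpace ℝ (Fin k)) →ₗ[ℝ] EuclideanSpace ℝ (Fin m))) v : EuclideanSpace ℝ (Fin m))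

/-- Second fundamental form of `x` at `p`: normal component of the second derivative. -/
noncomputable def sffP {k m : ℕ}
    (x : ℝ × EuclideanSpace ℝ (Fin k) → EuclideanSpace ℝ (Fin m))
    (p X Y : ℝ × EuclideanSpace ℝ (Fin k)) : EuclideanSpace ℝ (Fin m) :=
  fderiv ℝ (fderiv ℝ x) p X Y - tangentProjP x p (fderiv ℝ (fderiv ℝ x) p X Y)

/-- The map `x(s,u) = √(s² + c²) • Y(s,u)` of Theorem 4.2. -/
noncomputable def xMap {k m : ℕ} (c : ℝ)
    (Y : ℝ × EuclideanSpace ℝ (Fin k) → EuclideanSpace ℝ (Fin m))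
    (p : ℝ × EuclideanSpace ℝ (Fin k)) : EuclideanSpace ℝ (Fin m) :=
  Real.sqrt (p.1 ^ 2 + c ^ 2) • Y p

/-- **Equation (4.29) in the proof of Theorem 4.2.** The map `x(s,u) = √(s²+c²) • Y(s,u)`
satisfies `⟪x, ∂x/∂uⱼ⟫ = 0` and `⟪x, ∂x/∂s⟫ = s`; consequently the orthogonal projection
of the position vector onto the tangent space equals `s • ∂x/∂s`, i.e. `x^T = s ∂/∂s`. -/
theorem stmt_15 {n m : ℕ} (hn : 2 ≤ n) (hnm : n < m)
    (c : ℝ) (hc : 0 < c) (a b : ℝ) (ha : 0 ≤ a)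
    (V : Set (EuclideanSpace ℝ (Fin (n - 1)))) (hV : IsOpen V) (hVconn : IsConnected V)
    (Y : ℝ × EuclideanSpace ℝ (Fin (n - 1)) → EuclideanSpace ℝ (Fin m))
    (hYs : ContDiffOn ℝ (⊤ : ℕ∞) Y (Set.Ioo a b ×ˢ V))
    (hY1 : ∀ p ∈ Set.Ioo a b ×ˢ V, ⟪Y p, Y p⟫ = 1)
    (hYss : ∀ p ∈ Set.Ioo a b ×ˢ V,
      ⟪pds Y p, pds Y p⟫ = c ^ 2 / (p.1 ^ 2 + c ^ 2) ^ 2)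
    (hYsu : ∀ p ∈ Set.Ioo a b ×ˢ V, ∀ j : Fin (n - 1), ⟪pds Y p, pdu Y j p⟫ = 0)
    (g : Fin (n - 1) → Fin (n - 1) → EuclideanSpace ℝ (Fin (n - 1)) → ℝ)
    (hg : ∀ i j, ContDiffOn ℝ (⊤ : ℕ∞) (g i j) V)
    (hYuu : ∀ p ∈ Set.Ioo a b ×ˢ V, ∀ i j : Fin (n - 1),
      ⟪pdu Y i p, pdu Y j p⟫ = (p.1 ^ 2 / (p.1 ^ 2 + c ^ 2)) * g i j p.2)
    (hind : ∀ p ∈ Set.Ioo a b ×ˢ V,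
      LinearIndependent ℝ (fun j : Fin (n - 1) => pdu Y j p)) :
    ∀ p ∈ Set.Ioo a b ×ˢ V,
      (∀ j : Fin (n - 1), ⟪xMap c Y p, pdu (xMap c Y) j p⟫ = 0) ∧
      ⟪xMap c Y p, pds (xMap c Y) p⟫ = p.1 ∧
      tangentProjP (xMap c Y) p (xMap c Y p) = p.1 • pds (xMap c Y) p := by
  
  intro p hp
  have hNp : Set.Ioo a b ×ˢ V ∈ nhds p := ((isOpen_Ioo).prod hV).mem_nhds hp
  set s : ℝ := p.1 with hs
  set r : ℝ := Real.sqrt (s ^ 2 + c ^ 2) with hr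
  have hsc : (0:ℝ) < s ^ 2 + c ^ 2 := by positivity
  have hr0 : (0:ℝ) < r := Real.sqrt_pos.mpr hsc
  have hr2 : r ^ 2 = s ^ 2 + c ^ 2 := Real.sq_sqrt hsc.le
  -- differentiability of Y at p
  have hYat : DifferentiableAt ℝ Y p :=
    ((hYs.contDiffAt hNp).differentiableAt (by simp))
  have hY' : HasFDerivAt Y (fderiv ℝ Y p) p := hYat.hasFDerivAt
  -- derivative of the scalar factor
  have hφ1 : HasDerivAt (fun t : ℝ => Real.sqrt (t ^ 2 + c ^ 2)) (s / r) s := by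
    have h1 : HasDerivAt (fun t : ℝ => t ^ 2 + c ^ 2) (2 * s) s := by
      simpa using ((hasDerivAt_pow 2 s).add_const (c ^ 2))
    have h2 : HasDerivAt Real.sqrt (1 / (2 * r)) (s ^ 2 + c ^ 2) :=
      Real.hasDerivAt_sqrt hsc.ne'
    have := h2.comp s h1
    exact this.congr_deriv (by rw [div_mul_eq_mul_div, one_mul, mul_div_mul_left _ _ two_ne_zero])
  have hφ : HasFDerivAt (fun q : ℝ × EuclideanSpace ℝ (Fin (n - 1)) => Real.sqrt (q.1 ^ 2 + c ^ 2))
      ((s / r) • ContinuousLinearMap.fst ℝ ℝ (EuclideanSpace ℝ (Fin (n - 1)))) p := by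
    have := hφ1.comp_hasFDerivAt p (ContinuousLinearMap.fst ℝ ℝ (EuclideanSpace ℝ (Fin (n - 1)))).hasFDerivAt
    exact this
  -- derivative of xMap
  have hx : HasFDerivAt (xMap c Y)
      (r • fderiv ℝ Y p + ((s / r) • ContinuousLinearMap.fst ℝ ℝ (EuclideanSpace ℝ (Fin (n - 1)))).smulRight (Y p)) p := by
    exact hφ.smul hY'
  have hfd : fderiv ℝ (xMap c Y) p
      = r • fderiv ℝ Y p + ((s / r) • ContinuousLinearMap.fst ℝ ℝ (EuclideanSpace ℝ (Fin (n - 1)))).smulRight (Y p) :=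
    hx.fderiv
  -- pds and pdu of xMap
  have hpds : pds (xMap c Y) p = (s / r) • Y p + r • pds Y p := by
    rw [pds, hfd]
    simp [pds, add_comm]
  have hpdu : ∀ j : Fin (n - 1), pdu (xMap c Y) j p = r • pdu Y j p := by
    intro j
    rw [pdu, hfd]
    simp [pdu]
  -- orthogonality of Y to its derivatives: differentiate ⟪Y,Y⟫ = 1
  have hYorth : ∀ v : ℝ × EuclideanSpace ℝ (Fin (n - 1)), ⟪Y p, fderiv ℝ Y p v⟫ = 0 := by
    intro v
    have hconst : (fun q => ⟪Y q, Y q⟫) =ᶠ[nhds p] fun _ => (1:ℝ) :=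
      Filter.eventually_of_mem hNp hY1
    have h0 : HasFDerivAt (fun q => ⟪Y q, Y q⟫) (0 : (ℝ × EuclideanSpace ℝ (Fin (n - 1))) →L[ℝ] ℝ) p :=
      (hconst.hasFDerivAt_iff).mpr (hasFDerivAt_const 1 p)
    have h1 := hY'.inner ℝ hY'
    have h2 := h1.unique h0
    have h3 := congrArg (fun (L : (ℝ × EuclideanSpace ℝ (Fin (n - 1))) →L[ℝ] ℝ) => L v) h2
    simp only [ContinuousLinearMap.comp_apply, fderivInnerCLM_apply,
      ContinuousLinearMap.prod_apply, ContinuousLinearMap.zero_apply] at h3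
    have h4 : ⟪fderiv ℝ Y p v, Y p⟫ = ⟪Y p, fderiv ℝ Y p v⟫ := real_inner_comm _ _
    linarith [h3, h4.symm ▸ h3]
  have hYpds : ⟪Y p, pds Y p⟫ = 0 := hYorth (1, 0)
  have hYpdu : ∀ j, ⟪Y p, pdu Y j p⟫ = 0 := fun j => hYorth (0, EuclideanSpace.single j 1)
  have hxp : xMap c Y p = r • Y p := rfl
  have hY1p := hY1 p hp
  have hYssp := hYss p hp
  have hYsup := hYsu p hp
  -- the three inner product computations
  have key1 : ∀ j : Fin (n - 1), ⟪xMap c Y p, pdu (xMap c Y) j p⟫ = 0 := by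
    intro j
    rw [hxp, hpdu j, real_inner_smul_left, real_inner_smul_right, hYpdu j]
    ring
  have key2 : ⟪xMap c Y p, pds (xMap c Y) p⟫ = s := by
    rw [hxp, hpds, inner_add_right, real_inner_smul_left, real_inner_smul_left,
      real_inner_smul_right, real_inner_smul_right, hY1p, hYpds]
    field_simp
    ring
  -- pds x is a unit vector
  have key3 : ⟪pds (xMap c Y) p, pds (xMap c Y) p⟫ = 1 := by
    have h1 : ⟪pds Y p, Y p⟫ = 0 := by rw [real_inner_comm]; exact hYpds
    rw [← hs] at hYssp
    rw [hpds]
    simp only [inner_add_left, inner_add_right, real_inner_smul_left, real_inner_smul_right,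
      hY1p, hYpds, h1, hYssp]
    rw [← hr2]
    field_simp
    linear_combination (-1) * hr2
  have key4 : ∀ j : Fin (n - 1), ⟪pds (xMap c Y) p, pdu (xMap c Y) j p⟫ = 0 := by
    intro j
    have h1 : ⟪pds Y p, pdu Y j p⟫ = 0 := hYsup j
    rw [hpds, hpdu j]
    simp only [inner_add_left, real_inner_smul_left, real_inner_smul_right, hYpdu j, h1]
    ring
  refine ⟨key1, key2, ?_⟩
  -- the projection
  have hz1 : ⟪xMap c Y p - s • pds (xMap c Y) p, pds (xMap c Y) p⟫ = 0 := by
    rw [inner_sub_left, real_inner_smul_left, key2, key3]; ring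
  have hz2 : ∀ j : Fin (n - 1), ⟪xMap c Y p - s • pds (xMap c Y) p, pdu (xMap c Y) j p⟫ = 0 := by
    intro j
    rw [inner_sub_left, real_inner_smul_left, key1 j, key4 j]; ring
  unfold tangentProjP
  apply Submodule.eq_starProjection_of_mem_of_inner_eq_zero
  · exact Submodule.smul_mem _ _ (LinearMap.mem_range.mpr ⟨(1, 0), rfl⟩)
  · rintro w ⟨⟨t, u⟩, rfl⟩
    have hu : u = ∑ j, u j • EuclideanSpace.single j 1 := by
      have h := (EuclideanSpace.basisFun (Fin (n - 1)) ℝ).sum_repr u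
      simp [EuclideanSpace.basisFun_apply, EuclideanSpace.basisFun_repr] at h
      exact h.symm
    have hsplit : ((t, u) : ℝ × EuclideanSpace ℝ (Fin (n - 1)))
        = t • (1, 0) + ∑ j, u j • ((0 : ℝ), EuclideanSpace.single j 1) := by
      rw [Prod.ext_iff]
      constructor
      · simp [Prod.fst_sum]
      · simp [Prod.snd_sum, ← hu]
    rw [hsplit, map_add, map_smul, map_sum]
    simp only [map_smul]
    rw [inner_add_right, real_inner_smul_right, inner_sum]
    simp only [real_inner_smul_right]
    have : ∀ j : Fin (n - 1), (fderiv ℝ (xMap c Y) p : (ℝ × EuclideanSpace ℝ (Fin (n - 1))) →ₗ[ℝ] EuclideanSpace ℝ (Fin m)) ((0 : ℝ), EuclideanSpace.single j 1)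
        = pdu (xMap c Y) j p := fun j => rfl
    simp only [this]
    have hps : (fderiv ℝ (xMap c Y) p : (ℝ × EuclideanSpace ℝ (Fin (n - 1))) →ₗ[ℝ] EuclideanSpace ℝ (Fin m)) ((1 : ℝ), (0 : EuclideanSpace ℝ (Fin (n - 1))))
        = pds (xMap c Y) p := rfl
    rw [hps, hz1]
    simp only [hz2, mul_zero, Finset.sum_const_zero, add_zero]
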